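/- arXiv:1607.03556 — 8 statements merged into one kernel-verified Lean document; each statement's English description precedes it below -/
import Mathlib

section
/- Let X be a symmetric positive semidefinite n × n real matrix and Y an m × n real matrix satisfying: (i) there is a > 0 with ⟨x, Xx⟩ ≥ a‖x‖² for all x ∈ ℝⁿ with Yx = 0; (ii) ‖X‖ ≤ b in the spectral norm; (iii) there is c > 0 with ‖Yᵀη‖ ≥ c‖η‖ for all η ∈ ℝᵐ. Then for every y ∈ ℝⁿ and ξ ∈ ℝᵐ the saddle point system E(x, η) = (y, ξ), where E := [[X, Yᵀ],[Y, 0]], has a unique solution (x, η), and this solution satisfies ‖x‖ ≤ (1/a)‖y‖ + (1 + b/a)(1/c)‖ξ‖ and ‖η‖ ≤ (1 + b/a)(1/c)‖y‖ + (b/c²)(1 + b/a)‖ξ‖. -/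
open Matrix

/-- The vector in Euclidean space obtained by applying the matrix `M` to `x`
(matrix-vector multiplication, viewed as a map between Euclidean spaces). -/
noncomputable def mulVecE {ι κ : Type} [Fintype ι] [Fintype κ] [DecidableEq κ]
    (M : Matrix ι κ ℝ) (x : EuclideanSpace ℝ κ) : EuclideanSpace ℝ ι :=
  Matrix.toEuclideanLin M x

/-- The spectral norm (Euclidean operator norm) of a matrix. -/
noncomputable def specNorm {ι κ : Type} [Fintype ι] [Fintype κ] [DecidableEq κ]
    (M : Matrix ι κ ℝ) : ℝ :=
  ‖LinearMap.toContinuousLinearMap (Matrix.toEuclideanLin M)‖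

/-!
The block operator `(x, η) ↦ (A x + Bᵀ η, B x)` is injective: on its kernel, testing the first
equation with `x ∈ ker B` gives `⟪x, A x⟫ = 0`, so coercivity forces `x = 0`, and then `Bᵀ η = 0`
forces `η = 0` by the inf-sup condition. In finite dimensions it is therefore bijective.

For the bounds, split `x = x₀ + u` with `u ∈ ker B` and `x₀ ∈ (ker B)ᗮ = range Bᵀ`. The inf-sup
condition gives `c ‖x₀‖ ≤ ‖B x₀‖ = ‖ξ‖`; testing the first equation with `u` kills `Bᵀ η` and gives
`a ‖u‖ ≤ ‖y‖ + b ‖x₀‖`. Finally `c ‖η‖ ≤ ‖Bᵀ η‖ = ‖y - A x‖ ≤ ‖y‖ + b ‖x‖`.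
-/

open LinearMap
open scoped RealInnerProductSpace

lemma mul_le_of_mul_sq_le_mul {a t r : ℝ} (ht : 0 ≤ t) (hr : 0 ≤ r) (h : a * t ^ 2 ≤ t * r) :
    a * t ≤ r := by
  rcases ht.eq_or_lt with rfl | ht
  · simpa using hr
  · exact le_of_mul_le_mul_left (by linarith) ht

section Saddle

variable {E F : Type*} [NormedAddCommGroup E] [InnerProductSpace ℝ E] [FiniteDimensional ℝ E]
  [NormedAddCommGroup F] [InnerProductSpace ℝ F] [FiniteDimensional ℝ F]

noncomputable def saddleMap (A : E →ₗ[ℝ] E) (B : E →ₗ[ℝ] F) : E × F →ₗ[ℝ] E × F :=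
  (A ∘ₗ fst ℝ E F + B.adjoint ∘ₗ snd ℝ E F).prod (B ∘ₗ fst ℝ E F)

lemma saddleMap_apply (A : E →ₗ[ℝ] E) (B : E →ₗ[ℝ] F) (x : E) (η : F) :
    saddleMap A B (x, η) = (A x + B.adjoint η, B x) := rfl

lemma saddleMap_eq_iff {A : E →ₗ[ℝ] E} {B : E →ₗ[ℝ] F} {x y : E} {η ξ : F} :
    saddleMap A B (x, η) = (y, ξ) ↔ A x + B.adjoint η = y ∧ B x = ξ := by
  rw [saddleMap_apply, Prod.mk.injEq]

lemma mul_norm_le_norm_apply_of_mem_orthogonal_ker {B : E →ₗ[ℝ] F} {c : ℝ} (hc : 0 ≤ c)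
    (hinf : ∀ η, c * ‖η‖ ≤ ‖B.adjoint η‖) {x : E} (hx : x ∈ (ker B)ᗮ) : c * ‖x‖ ≤ ‖B x‖ := by
  obtain ⟨η, rfl⟩ : x ∈ range B.adjoint := B.orthogonal_ker ▸ hx
  refine mul_le_of_mul_sq_le_mul (norm_nonneg _) (norm_nonneg _) ?_
  calc c * ‖B.adjoint η‖ ^ 2 = c * ⟪η, B (B.adjoint η)⟫ := by
        rw [← adjoint_inner_left, real_inner_self_eq_norm_sq]
    _ ≤ c * (‖η‖ * ‖B (B.adjoint η)‖) := by gcongr; exact real_inner_le_norm _ _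
    _ = c * ‖η‖ * ‖B (B.adjoint η)‖ := by ring
    _ ≤ ‖B.adjoint η‖ * ‖B (B.adjoint η)‖ := by gcongr; exact hinf η

variable {A : E →ₗ[ℝ] E} {B : E →ₗ[ℝ] F} {a b c : ℝ}

theorem saddleMap_injective (ha : 0 < a) (hc : 0 < c)
    (hcoer : ∀ x, B x = 0 → a * ‖x‖ ^ 2 ≤ ⟪x, A x⟫)
    (hinf : ∀ η, c * ‖η‖ ≤ ‖B.adjoint η‖) : Function.Injective (saddleMap A B) := by
  rw [← ker_eq_bot, Submodule.eq_bot_iff]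
  rintro ⟨x, η⟩ h
  simp only [mem_ker, saddleMap_apply, Prod.mk_eq_zero] at h
  obtain ⟨hAx, hBx⟩ := h
  have hx : x = 0 := by
    have hcx := hcoer x hBx
    rw [eq_neg_of_add_eq_zero_left hAx, inner_neg_right, adjoint_inner_right, hBx,
      inner_zero_left, neg_zero] at hcx
    exact norm_eq_zero.mp (pow_eq_zero_iff two_ne_zero |>.mp
      (le_antisymm (nonpos_of_mul_nonpos_right hcx ha) (sq_nonneg _)))
  subst hx
  rw [map_zero, zero_add] at hAx
  have := hinf η
  rw [hAx, norm_zero] at this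
  simp [norm_eq_zero.mp (le_antisymm (nonpos_of_mul_nonpos_right this hc) (norm_nonneg _))]

theorem saddleMap_bijective (ha : 0 < a) (hc : 0 < c)
    (hcoer : ∀ x, B x = 0 → a * ‖x‖ ^ 2 ≤ ⟪x, A x⟫)
    (hinf : ∀ η, c * ‖η‖ ≤ ‖B.adjoint η‖) : Function.Bijective (saddleMap A B) :=
  have hinj := saddleMap_injective ha hc hcoer hinf
  ⟨hinj, injective_iff_surjective.mp hinj⟩

theorem norm_fst_le_of_saddleMap_eq (ha : 0 < a) (hc : 0 < c) (hb0 : 0 ≤ b)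
    (hA : ∀ x, ‖A x‖ ≤ b * ‖x‖)
    (hcoer : ∀ x, B x = 0 → a * ‖x‖ ^ 2 ≤ ⟪x, A x⟫)
    (hinf : ∀ η, c * ‖η‖ ≤ ‖B.adjoint η‖) {x y : E} {η ξ : F}
    (h : saddleMap A B (x, η) = (y, ξ)) :
    ‖x‖ ≤ (1 / a) * ‖y‖ + (1 + b / a) * (1 / c) * ‖ξ‖ := by
  obtain ⟨hy, rfl⟩ := saddleMap_eq_iff.mp h
  set u := (ker B).starProjection x
  set x₀ := x - u
  have hu : B u = 0 := (ker B).starProjection_apply_mem x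
  have hBx₀ : B x₀ = B x := by simp [x₀, hu]
  have hx₀ : c * ‖x₀‖ ≤ ‖B x‖ :=
    hBx₀ ▸ mul_norm_le_norm_apply_of_mem_orthogonal_ker hc.le hinf
      ((ker B).sub_starProjection_mem_orthogonal x)
  have hu_le : a * ‖u‖ ≤ ‖y‖ + b * ‖x₀‖ := by
    refine mul_le_of_mul_sq_le_mul (norm_nonneg _) (by positivity) ?_
    calc a * ‖u‖ ^ 2 ≤ ⟪u, A u⟫ := hcoer u hu
      _ = ⟪u, y - A x₀⟫ := by
        rw [← hy, show A u = A x - A x₀ by simp [x₀], inner_sub_right, inner_sub_right,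
          inner_add_right, adjoint_inner_right, hu, inner_zero_left, add_zero]
      _ ≤ ‖u‖ * ‖y - A x₀‖ := real_inner_le_norm _ _
      _ ≤ ‖u‖ * (‖y‖ + b * ‖x₀‖) := by
        gcongr; linarith [norm_sub_le y (A x₀), hA x₀]
  calc ‖x‖ = ‖x₀ + u‖ := by simp [x₀]
    _ ≤ ‖x₀‖ + ‖u‖ := norm_add_le _ _
    _ ≤ ‖x₀‖ + (‖y‖ + b * ‖x₀‖) / a := by gcongr; exact (le_div_iff₀' ha).mpr hu_le
    _ = 1 / a * ‖y‖ + (1 + b / a) * ‖x₀‖ := by ring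
    _ ≤ 1 / a * ‖y‖ + (1 + b / a) * (‖B x‖ / c) := by gcongr; exact (le_div_iff₀' hc).mpr hx₀
    _ = _ := by ring

theorem norm_snd_le_of_saddleMap_eq (ha : 0 < a) (hc : 0 < c) (hb0 : 0 ≤ b)
    (hA : ∀ x, ‖A x‖ ≤ b * ‖x‖)
    (hcoer : ∀ x, B x = 0 → a * ‖x‖ ^ 2 ≤ ⟪x, A x⟫)
    (hinf : ∀ η, c * ‖η‖ ≤ ‖B.adjoint η‖) {x y : E} {η ξ : F}
    (h : saddleMap A B (x, η) = (y, ξ)) :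
    ‖η‖ ≤ (1 + b / a) * (1 / c) * ‖y‖ + (b / c ^ 2) * (1 + b / a) * ‖ξ‖ := by
  have hx := norm_fst_le_of_saddleMap_eq ha hc hb0 hA hcoer hinf h
  obtain ⟨hy, rfl⟩ := saddleMap_eq_iff.mp h
  have hη : c * ‖η‖ ≤ ‖y‖ + b * ‖x‖ :=
    calc c * ‖η‖ ≤ ‖B.adjoint η‖ := hinf η
      _ = ‖y - A x‖ := by rw [← hy, add_sub_cancel_left]
      _ ≤ ‖y‖ + b * ‖x‖ := by linarith [norm_sub_le y (A x), hA x]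
  calc ‖η‖ ≤ (‖y‖ + b * ‖x‖) / c := (le_div_iff₀' hc).mpr hη
    _ ≤ (‖y‖ + b * (1 / a * ‖y‖ + (1 + b / a) * (1 / c) * ‖B x‖)) / c := by
      gcongr
    _ = _ := by field_simp; ring

end Saddle

theorem stmt0_general (n m : ℕ)
    (X : Matrix (Fin n) (Fin n) ℝ) (Y : Matrix (Fin m) (Fin n) ℝ)
    (a b c : ℝ) (ha : 0 < a) (hc : 0 < c)
    (hcoer : ∀ x : EuclideanSpace ℝ (Fin n),
      mulVecE Y x = 0 → a * ‖x‖ ^ 2 ≤ inner ℝ x (mulVecE X x))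
    (hb : specNorm X ≤ b)
    (hYt : ∀ η : EuclideanSpace ℝ (Fin m), c * ‖η‖ ≤ ‖mulVecE Yᵀ η‖)
    (y : EuclideanSpace ℝ (Fin n)) (ξ : EuclideanSpace ℝ (Fin m)) :
    ∃ x : EuclideanSpace ℝ (Fin n), ∃ η : EuclideanSpace ℝ (Fin m),
      (mulVecE X x + mulVecE Yᵀ η = y ∧ mulVecE Y x = ξ) ∧
      (∀ x' : EuclideanSpace ℝ (Fin n), ∀ η' : EuclideanSpace ℝ (Fin m),
        (mulVecE X x' + mulVecE Yᵀ η' = y ∧ mulVecE Y x' = ξ) → x' = x ∧ η' = η) ∧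
      ‖x‖ ≤ (1 / a) * ‖y‖ + (1 + b / a) * (1 / c) * ‖ξ‖ ∧
      ‖η‖ ≤ (1 + b / a) * (1 / c) * ‖y‖ + (b / c ^ 2) * (1 + b / a) * ‖ξ‖ := by
  set A := toEuclideanLin X
  set B := toEuclideanLin Y
  have hBt : toEuclideanLin Yᵀ = B.adjoint := by
    rw [← conjTranspose_eq_transpose_of_trivial, toEuclideanLin_conjTranspose_eq_adjoint]
  have hA : ∀ x, ‖A x‖ ≤ b * ‖x‖ := (LinearMap.toContinuousLinearMap A).le_of_opNorm_le hb
  have hb0 : 0 ≤ b := (norm_nonneg _).trans hb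
  have hinf : ∀ η, c * ‖η‖ ≤ ‖B.adjoint η‖ := fun η => hBt ▸ hYt η
  have hsol : ∀ x η, (mulVecE X x + mulVecE Yᵀ η = y ∧ mulVecE Y x = ξ) ↔
      saddleMap A B (x, η) = (y, ξ) := by
    simp only [saddleMap_eq_iff, mulVecE, hBt, A, B, implies_true]
  have hbij := saddleMap_bijective ha hc hcoer hinf
  obtain ⟨⟨x, η⟩, h⟩ := hbij.2 (y, ξ)
  refine ⟨x, η, (hsol x η).2 h,
    fun x' η' h' => Prod.mk.inj (hbij.1 (((hsol x' η').1 h').trans h.symm)),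
    norm_fst_le_of_saddleMap_eq ha hc hb0 hA hcoer hinf h,
    norm_snd_le_of_saddleMap_eq ha hc hb0 hA hcoer hinf h⟩

/-- Brezzi theory for the saddle point system `E = [[X, Yᵀ],[Y, 0]]`:
existence, uniqueness, and bounds on the solution. -/
theorem stmt0 (n m : ℕ)
    (X : Matrix (Fin n) (Fin n) ℝ) (Y : Matrix (Fin m) (Fin n) ℝ)
    (hXpsd : X.PosSemidef)
    (a b c : ℝ) (ha : 0 < a) (hc : 0 < c)
    (hcoer : ∀ x : EuclideanSpace ℝ (Fin n),
      mulVecE Y x = 0 → a * ‖x‖ ^ 2 ≤ inner ℝ x (mulVecE X x))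
    (hb : specNorm X ≤ b)
    (hYt : ∀ η : EuclideanSpace ℝ (Fin m), c * ‖η‖ ≤ ‖mulVecE Yᵀ η‖)
    (y : EuclideanSpace ℝ (Fin n)) (ξ : EuclideanSpace ℝ (Fin m)) :
    ∃ x : EuclideanSpace ℝ (Fin n), ∃ η : EuclideanSpace ℝ (Fin m),
      (mulVecE X x + mulVecE Yᵀ η = y ∧ mulVecE Y x = ξ) ∧
      (∀ x' : EuclideanSpace ℝ (Fin n), ∀ η' : EuclideanSpace ℝ (Fin m),
        (mulVecE X x' + mulVecE Yᵀ η' = y ∧ mulVecE Y x' = ξ) → x' = x ∧ η' = η) ∧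
      ‖x‖ ≤ (1 / a) * ‖y‖ + (1 + b / a) * (1 / c) * ‖ξ‖ ∧
      ‖η‖ ≤ (1 + b / a) * (1 / c) * ‖y‖ + (b / c ^ 2) * (1 + b / a) * ‖ξ‖ :=
  stmt0_general n m X Y a b c ha hc hcoer hb hYt y ξ
end

section
/- Let X be a symmetric positive semidefinite n × n real matrix and Y an m × n real matrix satisfying: (i) there is a > 0 with ⟨x, Xx⟩ ≥ a‖x‖² for all x ∈ ℝⁿ with Yx = 0; (ii) ‖X‖ ≤ b in the spectral norm; (iii) there is c > 0 with ‖Yᵀη‖ ≥ c‖η‖ for all η ∈ ℝᵐ. Let E := [[X, Yᵀ],[Y, 0]]. Then for every z ∈ ℝⁿ⁺ᵐ one has (1/σ_max(Ψ))·‖z‖ ≤ ‖Ez‖, where Ψ is the 2 × 2 matrix [[1/a, (1 + b/a)/c],[(1 + b/a)/c, (b/c²)(1 + b/a)]] and its largest singular value is σ_max(Ψ) = (ba + b² + c² + √(b⁴ + 2b³a + b²a² + 2b²c² + 6bac² + 4a²c² + c⁴))/(2ac²). -/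
open Matrix

/-!
Write `E z = (w₁, w₂)` with `w₁ = X x + Yᵀ η` and `w₂ = Y x`, and split `x = u + v` with
`u ∈ ker Y` and `v ∈ (ker Y)ᗮ = range Yᵀ`. The inf-sup bound on `Yᵀ` gives `c ‖v‖ ≤ ‖w₂‖`,
coercivity on `ker Y` tested against `u` gives `a ‖u‖ ≤ ‖w₁‖ + b ‖v‖`, and
`c ‖η‖ ≤ ‖w₁ - X x‖ ≤ ‖w₁‖ + b ‖x‖`. Hence `(‖x‖, ‖η‖) ≤ Ψ (‖w₁‖, ‖w₂‖)` entrywise, so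
`‖z‖ ≤ ‖Ψ‖ ‖E z‖`. The matrix `Ψ` is symmetric with nonnegative trace, so its spectral norm is
its top eigenvalue `(p + r + √((p - r)² + 4 q²)) / 2`, which is the stated `s`.
-/

section SpecNorm

variable {ι κ : Type} [Fintype ι] [Fintype κ] [DecidableEq κ]

lemma norm_mulVecE_le (M : Matrix ι κ ℝ) (x : EuclideanSpace ℝ κ) :
    ‖mulVecE M x‖ ≤ specNorm M * ‖x‖ :=
  (LinearMap.toContinuousLinearMap (Matrix.toEuclideanLin M)).le_opNorm x

lemma specNorm_le_of_forall {M : Matrix ι κ ℝ} {C : ℝ} (hC : 0 ≤ C)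
    (h : ∀ x, ‖mulVecE M x‖ ≤ C * ‖x‖) : specNorm M ≤ C :=
  ContinuousLinearMap.opNorm_le_bound _ hC h

lemma abs_le_specNorm_of_mulVecE_eq_smul {M : Matrix κ κ ℝ} {v : EuclideanSpace ℝ κ} {μ : ℝ}
    (hv : v ≠ 0) (h : mulVecE M v = μ • v) : |μ| ≤ specNorm M := by
  have := norm_mulVecE_le M v
  rw [h, norm_smul, Real.norm_eq_abs] at this
  exact le_of_mul_le_mul_right this (norm_pos_iff.mpr hv)

end SpecNorm

section FinTwo

lemma norm_sq_fin_two (v : EuclideanSpace ℝ (Fin 2)) : ‖v‖ ^ 2 = v 0 ^ 2 + v 1 ^ 2 := by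
  simp [EuclideanSpace.real_norm_sq_eq, Fin.sum_univ_two]

lemma mulVecE_fin_two (p q q' r : ℝ) (v : EuclideanSpace ℝ (Fin 2)) :
    mulVecE !![p, q; q', r] v = !₂[p * v 0 + q * v 1, q' * v 0 + r * v 1] := by
  ext i
  fin_cases i <;> simp [mulVecE, Matrix.mulVec, dotProduct, Fin.sum_univ_two]

lemma sq_add_sq_le_specNorm_sq_mul (M : Matrix (Fin 2) (Fin 2) ℝ) {x y ω₁ ω₂ : ℝ}
    (hx₀ : 0 ≤ x) (hy₀ : 0 ≤ y) (hx : x ≤ M 0 0 * ω₁ + M 0 1 * ω₂)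
    (hy : y ≤ M 1 0 * ω₁ + M 1 1 * ω₂) :
    x ^ 2 + y ^ 2 ≤ specNorm M ^ 2 * (ω₁ ^ 2 + ω₂ ^ 2) := by
  have hM : M = !![M 0 0, M 0 1; M 1 0, M 1 1] := Matrix.eta_fin_two M
  have h := norm_mulVecE_le M !₂[ω₁, ω₂]
  rw [hM, mulVecE_fin_two, ← hM] at h
  have h2 := pow_le_pow_left₀ (norm_nonneg _) h 2
  rw [mul_pow, norm_sq_fin_two, norm_sq_fin_two] at h2
  simp only [Matrix.cons_val_zero, Matrix.cons_val_one] at h2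
  nlinarith [pow_le_pow_left₀ hx₀ hx 2, pow_le_pow_left₀ hy₀ hy 2]

/-- For `M = !![p, q; q, r]` with top eigenvalue `s`, Cayley–Hamilton turns `s² - M²` into
`(p + r) (s - M)`, and `s - M` is positive semidefinite of rank one; this gives `key`. -/
lemma sq_add_sq_le_of_symm_fin_two (p q r u w : ℝ) (hpr : 0 ≤ p + r) :
    (p * u + q * w) ^ 2 + (q * u + r * w) ^ 2 ≤
      ((p + r + √((p - r) ^ 2 + 4 * q ^ 2)) / 2) ^ 2 * (u ^ 2 + w ^ 2) := by
  have ht₀ := Real.sqrt_nonneg ((p - r) ^ 2 + 4 * q ^ 2)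
  have ht := Real.sq_sqrt (by positivity : 0 ≤ (p - r) ^ 2 + 4 * q ^ 2)
  generalize √((p - r) ^ 2 + 4 * q ^ 2) = t at *
  have key : 4 * t * (((p + r + t) / 2) ^ 2 * (u ^ 2 + w ^ 2) -
        ((p * u + q * w) ^ 2 + (q * u + r * w) ^ 2)) =
      (p + r) * (((t - (p - r)) * u - 2 * q * w) ^ 2 + ((t + (p - r)) * w - 2 * q * u) ^ 2) := by
    linear_combination (t + p + r) * (u ^ 2 + w ^ 2) * ht
  rcases ht₀.eq_or_lt with rfl | ht_pos
  · obtain ⟨rfl, rfl⟩ : q = 0 ∧ p = r := ⟨by nlinarith, by nlinarith⟩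
    exact le_of_eq (by ring)
  · nlinarith

lemma specNorm_fin_two_symm (p q r : ℝ) (hq : q ≠ 0) (hpr : 0 ≤ p + r) :
    specNorm !![p, q; q, r] = (p + r + √((p - r) ^ 2 + 4 * q ^ 2)) / 2 := by
  refine le_antisymm (specNorm_le_of_forall (by positivity) fun v => ?_) ?_
  · refine le_of_sq_le_sq ?_ (by positivity)
    rw [mul_pow, norm_sq_fin_two, norm_sq_fin_two, mulVecE_fin_two]
    simpa using sq_add_sq_le_of_symm_fin_two p q r (v 0) (v 1) hpr
  have ht₀ := Real.sqrt_nonneg ((p - r) ^ 2 + 4 * q ^ 2)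
  have ht := Real.sq_sqrt (by positivity : 0 ≤ (p - r) ^ 2 + 4 * q ^ 2)
  generalize √((p - r) ^ 2 + 4 * q ^ 2) = t at *
  set s := (p + r + t) / 2
  have hv : !₂[q, s - p] ≠ 0 := fun h => hq (by simpa using congrArg (· 0) h)
  have heig : mulVecE !![p, q; q, r] !₂[q, s - p] = s • !₂[q, s - p] := by
    rw [mulVecE_fin_two]
    ext i
    fin_cases i
    · simp only [Fin.zero_eta, Matrix.cons_val_zero, Matrix.cons_val_one,
        PiLp.smul_apply, smul_eq_mul]
      ring
    · simp only [Fin.mk_one, Matrix.cons_val_zero, Matrix.cons_val_one,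
        PiLp.smul_apply, smul_eq_mul]
      linear_combination (-1 / 4 : ℝ) * ht
  simpa [abs_of_nonneg (by positivity : 0 ≤ s)] using abs_le_specNorm_of_mulVecE_eq_smul hv heig

lemma specNorm_saddle_matrix {a b c : ℝ} (ha : 0 < a) (hb : 0 ≤ b) (hc : 0 < c) :
    specNorm !![1 / a, (1 + b / a) * (1 / c); (1 + b / a) * (1 / c), (b / c ^ 2) * (1 + b / a)] =
      (b * a + b ^ 2 + c ^ 2 +
        √(b ^ 4 + 2 * b ^ 3 * a + b ^ 2 * a ^ 2 + 2 * b ^ 2 * c ^ 2 +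
          6 * b * a * c ^ 2 + 4 * a ^ 2 * c ^ 2 + c ^ 4)) / (2 * a * c ^ 2) := by
  rw [specNorm_fin_two_symm _ _ _ (by positivity) (by positivity)]
  have hdisc : (1 / a - b / c ^ 2 * (1 + b / a)) ^ 2 + 4 * ((1 + b / a) * (1 / c)) ^ 2 =
      (b ^ 4 + 2 * b ^ 3 * a + b ^ 2 * a ^ 2 + 2 * b ^ 2 * c ^ 2 +
        6 * b * a * c ^ 2 + 4 * a ^ 2 * c ^ 2 + c ^ 4) / (a * c ^ 2) ^ 2 := by
    field_simp
    ring
  rw [hdisc, Real.sqrt_div' _ (by positivity), Real.sqrt_sq (by positivity)]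
  field_simp
  ring

end FinTwo

section Saddle

open LinearMap

variable {V W : Type*} [NormedAddCommGroup V] [InnerProductSpace ℝ V] [FiniteDimensional ℝ V]
  [NormedAddCommGroup W] [InnerProductSpace ℝ W] [FiniteDimensional ℝ W]

lemma mul_norm_le_of_mem_orthogonal_ker {T : V →ₗ[ℝ] W} {c : ℝ}
    (hT : ∀ η, c * ‖η‖ ≤ ‖T.adjoint η‖) {v : V} (hv : v ∈ (ker T)ᗮ) :
    c * ‖v‖ ≤ ‖T v‖ := by
  rw [orthogonal_ker] at hv
  obtain ⟨η, rfl⟩ := hv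
  set v := T.adjoint η
  rcases le_or_gt c 0 with hc | hc
  · exact (mul_nonpos_of_nonpos_of_nonneg hc (norm_nonneg _)).trans (norm_nonneg _)
  have h : ‖v‖ * (c * ‖v‖) ≤ ‖v‖ * ‖T v‖ :=
    calc ‖v‖ * (c * ‖v‖) = c * inner ℝ η (T v) := by
          rw [← adjoint_inner_left, real_inner_self_eq_norm_sq]; ring
      _ ≤ c * (‖η‖ * ‖T v‖) := by gcongr; exact real_inner_le_norm _ _
      _ ≤ ‖v‖ * ‖T v‖ := by rw [← mul_assoc]; gcongr; exact hT η
  rcases (norm_nonneg v).eq_or_lt with hv | hv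
  · rw [← hv, mul_zero]; exact norm_nonneg _
  · exact le_of_mul_le_mul_left h hv

lemma mul_norm_le_of_mem_ker {A : V →ₗ[ℝ] V} {T : V →ₗ[ℝ] W} {a b : ℝ}
    (hA : ∀ x, ‖A x‖ ≤ b * ‖x‖) {u : V} (hu : u ∈ ker T)
    (hcoer : a * ‖u‖ ^ 2 ≤ inner ℝ u (A u)) (v : V) (η : W) :
    a * ‖u‖ ≤ ‖A (u + v) + T.adjoint η‖ + b * ‖v‖ := by
  have horth : inner ℝ u (T.adjoint η) = (0 : ℝ) := by
    rw [adjoint_inner_right, mem_ker.mp hu, inner_zero_left]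
  have h : ‖u‖ * (a * ‖u‖) ≤ ‖u‖ * (‖A (u + v) + T.adjoint η‖ + b * ‖v‖) :=
    calc ‖u‖ * (a * ‖u‖) = a * ‖u‖ ^ 2 := by ring
      _ ≤ inner ℝ u (A u) := hcoer
      _ = inner ℝ u (A (u + v) + T.adjoint η) - inner ℝ u (A v) := by
        rw [map_add, inner_add_right, inner_add_right, horth]; ring
      _ ≤ ‖u‖ * ‖A (u + v) + T.adjoint η‖ + ‖u‖ * (b * ‖v‖) := by
        have h₁ := real_inner_le_norm u (A (u + v) + T.adjoint η)
        have h₂ := neg_le_of_abs_le (abs_real_inner_le_norm u (A v))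
        have h₃ := mul_le_mul_of_nonneg_left (hA v) (norm_nonneg u)
        linarith
      _ = _ := by ring
  rcases (norm_nonneg u).eq_or_lt with hu₀ | hu₀
  · rw [← hu₀, mul_zero]
    exact add_nonneg (norm_nonneg _) ((norm_nonneg _).trans (hA v))
  · exact le_of_mul_le_mul_left h hu₀

variable {A : V →ₗ[ℝ] V} {T : V →ₗ[ℝ] W} {a b c : ℝ}

lemma norm_le_saddle_fst (ha : 0 < a) (hb : 0 ≤ b) (hc : 0 < c)
    (hcoer : ∀ u ∈ ker T, a * ‖u‖ ^ 2 ≤ inner ℝ u (A u)) (hA : ∀ x, ‖A x‖ ≤ b * ‖x‖)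
    (hT : ∀ η, c * ‖η‖ ≤ ‖T.adjoint η‖) (x : V) (η : W) :
    ‖x‖ ≤ 1 / a * ‖A x + T.adjoint η‖ + (1 + b / a) * (1 / c) * ‖T x‖ := by
  obtain ⟨u, hu, v, hv, rfl⟩ := (ker T).exists_add_mem_mem_orthogonal x
  have hTu : T (u + v) = T v := by rw [map_add, mem_ker.mp hu, zero_add]
  have hv' : ‖v‖ ≤ 1 / c * ‖T v‖ := by
    rw [one_div_mul_eq_div, le_div_iff₀ hc, mul_comm]
    exact mul_norm_le_of_mem_orthogonal_ker hT hv
  have hu' := mul_norm_le_of_mem_ker hA hu (hcoer u hu) v η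
  rw [hTu]
  calc ‖u + v‖ ≤ ‖u‖ + ‖v‖ := norm_add_le u v
    _ ≤ (‖A (u + v) + T.adjoint η‖ + b * ‖v‖) / a + ‖v‖ := by
      gcongr; rwa [le_div_iff₀ ha, mul_comm]
    _ = 1 / a * ‖A (u + v) + T.adjoint η‖ + (1 + b / a) * ‖v‖ := by
      field_simp; ring
    _ ≤ 1 / a * ‖A (u + v) + T.adjoint η‖ + (1 + b / a) * (1 / c) * ‖T v‖ := by
      rw [mul_assoc]
      gcongr

lemma norm_le_saddle_snd (ha : 0 < a) (hb : 0 ≤ b) (hc : 0 < c)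
    (hcoer : ∀ u ∈ ker T, a * ‖u‖ ^ 2 ≤ inner ℝ u (A u)) (hA : ∀ x, ‖A x‖ ≤ b * ‖x‖)
    (hT : ∀ η, c * ‖η‖ ≤ ‖T.adjoint η‖) (x : V) (η : W) :
    ‖η‖ ≤ (1 + b / a) * (1 / c) * ‖A x + T.adjoint η‖ +
      b / c ^ 2 * (1 + b / a) * ‖T x‖ := by
  have hx := norm_le_saddle_fst ha hb hc hcoer hA hT x η
  have hη : c * ‖η‖ ≤ ‖A x + T.adjoint η‖ + b * ‖x‖ :=
    calc c * ‖η‖ ≤ ‖T.adjoint η‖ := hT η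
      _ = ‖(A x + T.adjoint η) - A x‖ := by rw [add_sub_cancel_left]
      _ ≤ ‖A x + T.adjoint η‖ + ‖A x‖ := norm_sub_le _ _
      _ ≤ ‖A x + T.adjoint η‖ + b * ‖x‖ := by gcongr; exact hA x
  rw [← le_div_iff₀' hc] at hη
  refine hη.trans ?_
  calc (‖A x + T.adjoint η‖ + b * ‖x‖) / c
      ≤ (‖A x + T.adjoint η‖ + b * (1 / a * ‖A x + T.adjoint η‖ +
          (1 + b / a) * (1 / c) * ‖T x‖)) / c := by gcongr
    _ = _ := by field_simp; ring

end Saddle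

section Blocks

variable {ι κ : Type} [Fintype ι] [Fintype κ]

lemma norm_sq_eq_sumEquivProd (z : EuclideanSpace ℝ (ι ⊕ κ)) :
    ‖z‖ ^ 2 = ‖(EuclideanSpace.sumEquivProd z).1‖ ^ 2 +
      ‖(EuclideanSpace.sumEquivProd z).2‖ ^ 2 := by
  simp [EuclideanSpace.real_norm_sq_eq, Fintype.sum_sum_type]

lemma sumEquivProd_mulVecE_fromBlocks [DecidableEq ι] [DecidableEq κ] {μ ν : Type}
    [Fintype μ] [Fintype ν] (A : Matrix μ ι ℝ) (B : Matrix μ κ ℝ) (C : Matrix ν ι ℝ)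
    (D : Matrix ν κ ℝ) (z : EuclideanSpace ℝ (ι ⊕ κ)) :
    EuclideanSpace.sumEquivProd (mulVecE (fromBlocks A B C D) z) =
      (mulVecE A (EuclideanSpace.sumEquivProd z).1 + mulVecE B (EuclideanSpace.sumEquivProd z).2,
       mulVecE C (EuclideanSpace.sumEquivProd z).1 + mulVecE D (EuclideanSpace.sumEquivProd z).2) := by
  ext i <;> simp [mulVecE, fromBlocks_mulVec] <;> rfl

end Blocks

lemma mulVecE_transpose {ι κ : Type} [Fintype ι] [Fintype κ] [DecidableEq ι] [DecidableEq κ]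
    (Y : Matrix ι κ ℝ) (η : EuclideanSpace ℝ ι) :
    mulVecE Yᵀ η = Y.toEuclideanLin.adjoint η := by
  rw [← Matrix.toEuclideanLin_conjTranspose_eq_adjoint, conjTranspose_eq_transpose_of_trivial]
  rfl

theorem stmt1_general (n m : ℕ)
    (X : Matrix (Fin n) (Fin n) ℝ) (Y : Matrix (Fin m) (Fin n) ℝ)
    (a b c : ℝ) (ha : 0 < a) (hc : 0 < c)
    (hcoer : ∀ x : EuclideanSpace ℝ (Fin n),
      mulVecE Y x = 0 → a * ‖x‖ ^ 2 ≤ inner ℝ x (mulVecE X x))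
    (hb : specNorm X ≤ b)
    (hYt : ∀ η : EuclideanSpace ℝ (Fin m), c * ‖η‖ ≤ ‖mulVecE Yᵀ η‖)
    (E : Matrix (Fin n ⊕ Fin m) (Fin n ⊕ Fin m) ℝ)
    (hE : E = fromBlocks X Yᵀ Y 0)
    (Ψ : Matrix (Fin 2) (Fin 2) ℝ)
    (hΨ : Ψ = !![1 / a, (1 + b / a) * (1 / c);
                 (1 + b / a) * (1 / c), (b / c ^ 2) * (1 + b / a)])
    (s : ℝ)
    (hs : s = (b * a + b ^ 2 + c ^ 2 +
        Real.sqrt (b ^ 4 + 2 * b ^ 3 * a + b ^ 2 * a ^ 2 + 2 * b ^ 2 * c ^ 2 +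
          6 * b * a * c ^ 2 + 4 * a ^ 2 * c ^ 2 + c ^ 4)) / (2 * a * c ^ 2)) :
    specNorm Ψ = s ∧
    ∀ z : EuclideanSpace ℝ (Fin n ⊕ Fin m), (1 / s) * ‖z‖ ≤ ‖mulVecE E z‖ := by
  have hb₀ : 0 ≤ b := (norm_nonneg _).trans hb
  have hσ : specNorm Ψ = s := by rw [hΨ, hs]; exact specNorm_saddle_matrix ha hb₀ hc
  have hs₀ : 0 < s := by rw [hs]; positivity
  refine ⟨hσ, fun z => ?_⟩
  have hA (x) : ‖X.toEuclideanLin x‖ ≤ b * ‖x‖ :=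
    (norm_mulVecE_le X x).trans (mul_le_mul_of_nonneg_right hb (norm_nonneg x))
  have hT (η) : c * ‖η‖ ≤ ‖Y.toEuclideanLin.adjoint η‖ := mulVecE_transpose Y η ▸ hYt η
  set x := (EuclideanSpace.sumEquivProd z).1
  set η := (EuclideanSpace.sumEquivProd z).2
  have hEz : ‖mulVecE E z‖ ^ 2 =
      ‖X.toEuclideanLin x + Y.toEuclideanLin.adjoint η‖ ^ 2 + ‖Y.toEuclideanLin x‖ ^ 2 := by
    rw [norm_sq_eq_sumEquivProd, hE, sumEquivProd_mulVecE_fromBlocks, mulVecE_transpose]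
    simp only [mulVecE, map_zero, LinearMap.zero_apply, add_zero]
    rfl
  have key := sq_add_sq_le_specNorm_sq_mul Ψ (norm_nonneg x) (norm_nonneg η)
    (by rw [hΨ]; exact norm_le_saddle_fst ha hb₀ hc hcoer hA hT x η)
    (by rw [hΨ]; exact norm_le_saddle_snd ha hb₀ hc hcoer hA hT x η)
  rw [← norm_sq_eq_sumEquivProd, ← hEz, hσ, ← mul_pow] at key
  rw [one_div_mul_eq_div, div_le_iff₀' hs₀]
  exact (pow_le_pow_iff_left₀ (norm_nonneg _) (by positivity) two_ne_zero).mp key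

/-- Lower bound `(1/σ_max(Ψ))‖z‖ ≤ ‖Ez‖` for the saddle point matrix
`E = [[X, Yᵀ],[Y, 0]]`, together with the explicit formula for `σ_max(Ψ)`. -/
theorem stmt1 (n m : ℕ)
    (X : Matrix (Fin n) (Fin n) ℝ) (Y : Matrix (Fin m) (Fin n) ℝ)
    (hXpsd : X.PosSemidef)
    (a b c : ℝ) (ha : 0 < a) (hc : 0 < c)
    (hcoer : ∀ x : EuclideanSpace ℝ (Fin n),
      mulVecE Y x = 0 → a * ‖x‖ ^ 2 ≤ inner ℝ x (mulVecE X x))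
    (hb : specNorm X ≤ b)
    (hYt : ∀ η : EuclideanSpace ℝ (Fin m), c * ‖η‖ ≤ ‖mulVecE Yᵀ η‖)
    (E : Matrix (Fin n ⊕ Fin m) (Fin n ⊕ Fin m) ℝ)
    (hE : E = fromBlocks X Yᵀ Y 0)
    (Ψ : Matrix (Fin 2) (Fin 2) ℝ)
    (hΨ : Ψ = !![1 / a, (1 + b / a) * (1 / c);
                 (1 + b / a) * (1 / c), (b / c ^ 2) * (1 + b / a)])
    (s : ℝ)
    (hs : s = (b * a + b ^ 2 + c ^ 2 +
        Real.sqrt (b ^ 4 + 2 * b ^ 3 * a + b ^ 2 * a ^ 2 + 2 * b ^ 2 * c ^ 2 +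
          6 * b * a * c ^ 2 + 4 * a ^ 2 * c ^ 2 + c ^ 4)) / (2 * a * c ^ 2)) :
    specNorm Ψ = s ∧
    ∀ z : EuclideanSpace ℝ (Fin n ⊕ Fin m), (1 / s) * ‖z‖ ≤ ‖mulVecE E z‖ :=
  stmt1_general n m X Y a b c ha hc hcoer hb hYt E hE Ψ hΨ s hs
end

section
/- Let K := [[αRᵀR, 0, Tᵀ],[0, BᵀB, Aᵀ],[T, A, 0]] be the KKT matrix and P := diag(αRᵀR + ρTᵀT, BᵀB + ρAᵀA, (1/ρ)I_{n_u}) the block diagonal preconditioner, which is symmetric positive definite since R and A are invertible and α, ρ > 0. Then the symmetrically preconditioned KKT matrix satisfies the identity P^{-1/2} K P^{-1/2} = [[I − FᵀF, 0, Fᵀ],[0, I − GᵀG, Gᵀ],[F, G, 0]] = E. -/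
/-!
Write `Q₁ = (α/ρ) RᵀR + TᵀT` and `Q₂ = (1/ρ) BᵀB + AᵀA`. Then `P = diag(ρ Q₁, ρ Q₂, ρ⁻¹ I)`, and
uniqueness of positive square roots gives `P^{-1/2} = diag(ρ^{-1/2} Q₁^{-1/2}, ρ^{-1/2} Q₂^{-1/2},
ρ^{1/2} I)`. Conjugating `K` by this matrix, the powers of `ρ` cancel on the off-diagonal blocks,
which become `F` and `G`, while on the diagonal
`Q^{-1/2} X Q^{-1/2} = I - (T Q^{-1/2})ᵀ (T Q^{-1/2})` whenever `Q = X + TᵀT`.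
-/

open Matrix

/-- The square root of a positive semidefinite matrix, with its meaning in the older Mathlib
(removed from the current one). -/
noncomputable def Matrix.PosSemidef.sqrt {n : Type*} [Fintype n] [DecidableEq n]
    {A : Matrix n n ℝ} (hA : A.PosSemidef) : Matrix n n ℝ :=
  hA.1.eigenvectorUnitary.1 * diagonal ((↑) ∘ (√·) ∘ hA.1.eigenvalues) *
    (star hA.1.eigenvectorUnitary : Matrix n n ℝ)

namespace Matrix

section BlockDiagonal

variable {m n R : Type*} [Fintype m] [Fintype n]

theorem fromBlocks_diag_mul_fromBlocks_diag [NonUnitalNonAssocSemiring R]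
    (A A' : Matrix m m R) (D D' : Matrix n n R) :
    fromBlocks A 0 0 D * fromBlocks A' 0 0 D' = fromBlocks (A * A') 0 0 (D * D') := by
  simp [fromBlocks_multiply]

theorem fromBlocks_diag_mul_fromBlocks_mul_fromBlocks_diag [NonUnitalNonAssocSemiring R]
    (A H : Matrix m m R) (X : Matrix m n R) (Y : Matrix n m R) (D Z : Matrix n n R) :
    fromBlocks A 0 0 D * fromBlocks H X Y Z * fromBlocks A 0 0 D =
      fromBlocks (A * H * A) (A * X * D) (D * Y * A) (D * Z * D) := by
  simp [fromBlocks_multiply]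

theorem inv_fromBlocks_diag_eq [DecidableEq m] [DecidableEq n] [CommRing R]
    {A A' : Matrix m m R} {D D' : Matrix n n R} (hA : A * A' = 1) (hD : D * D' = 1) :
    (fromBlocks A 0 0 D)⁻¹ = fromBlocks A' 0 0 D' :=
  inv_eq_right_inv (by rw [fromBlocks_diag_mul_fromBlocks_diag, hA, hD, fromBlocks_one])

theorem PosSemidef.fromBlocks_diag [CommRing R] [PartialOrder R] [StarRing R] [StarOrderedRing R]
    {A : Matrix m m R} {D : Matrix n n R} (hA : A.PosSemidef) (hD : D.PosSemidef) :
    (fromBlocks A 0 0 D).PosSemidef := by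
  refine .of_dotProduct_mulVec_nonneg ?_ fun x => ?_
  · simp [IsHermitian, fromBlocks_conjTranspose, hA.1.eq, hD.1.eq]
  · rw [fromBlocks_mulVec, ← Sum.elim_comp_inl_inr (star x), sumElim_dotProduct_sumElim]
    simp only [zero_mulVec, add_zero, zero_add]
    exact add_nonneg (hA.dotProduct_mulVec_nonneg _) (hD.dotProduct_mulVec_nonneg _)

theorem fromBlocks_smul_mul_saddlePoint_mul_fromBlocks_smul [DecidableEq n] [Field R]
    {c : R} (hc : c ≠ 0) {D : Matrix m m R} (hD : Dᵀ = D) (H : Matrix m m R)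
    (C : Matrix n m R) :
    fromBlocks (c⁻¹ • D) 0 0 (c • 1) * fromBlocks H Cᵀ C 0 * fromBlocks (c⁻¹ • D) 0 0 (c • 1) =
      fromBlocks (D * ((c * c)⁻¹ • H) * D) (C * D)ᵀ (C * D) 0 := by
  rw [fromBlocks_diag_mul_fromBlocks_mul_fromBlocks_diag, transpose_mul, hD]
  simp only [Matrix.smul_mul, Matrix.mul_smul, Matrix.mul_one, Matrix.one_mul, Matrix.mul_zero,
    smul_smul, smul_zero, mul_inv, mul_inv_cancel₀ hc, inv_mul_cancel₀ hc, one_smul]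

end BlockDiagonal

theorem inv_mul_mul_inv_eq_one_sub {m n R : Type*} [Fintype m] [Fintype n] [DecidableEq n]
    [CommRing R] {S Q : Matrix n n R} (T : Matrix m n R) (hS : Sᵀ = S) (hdet : IsUnit S.det)
    (hSQ : S * S = Q + Tᵀ * T) :
    S⁻¹ * Q * S⁻¹ = 1 - (T * S⁻¹)ᵀ * (T * S⁻¹) := by
  rw [eq_sub_of_add_eq hSQ.symm, transpose_mul, transpose_nonsing_inv, hS]
  simp only [Matrix.mul_sub, Matrix.sub_mul, Matrix.mul_assoc,
    nonsing_inv_mul_cancel_left _ _ hdet, mul_nonsing_inv _ hdet]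

end Matrix

namespace Matrix.PosSemidef

open scoped MatrixOrder

variable {m n : Type*} [Fintype m] [Fintype n] [DecidableEq m] [DecidableEq n]
  {A B : Matrix n n ℝ}

theorem sqrt_eq_cfcSqrt (hA : A.PosSemidef) : hA.sqrt = CFC.sqrt A := by
  rw [CFC.sqrt_eq_real_sqrt A hA.nonneg, cfcₙ_eq_cfc, hA.1.cfc_eq, IsHermitian.cfc,
    Unitary.conjStarAlgAut_apply]
  rfl

theorem posSemidef_sqrt (hA : A.PosSemidef) : hA.sqrt.PosSemidef := by
  rw [hA.sqrt_eq_cfcSqrt]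
  exact (CFC.sqrt_nonneg A).posSemidef

theorem sqrt_mul_self (hA : A.PosSemidef) : hA.sqrt * hA.sqrt = A := by
  rw [hA.sqrt_eq_cfcSqrt]
  exact CFC.sqrt_mul_sqrt_self A hA.nonneg

theorem eq_sqrt_of_mul_self_eq (hA : A.PosSemidef) (hB : B.PosSemidef) (h : B * B = A) :
    B = hA.sqrt := by
  rw [hA.sqrt_eq_cfcSqrt]
  exact (CFC.sqrt_unique h hB.nonneg).symm

theorem transpose_sqrt (hA : A.PosSemidef) : hA.sqrtᵀ = hA.sqrt :=
  hA.posSemidef_sqrt.1.eq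

theorem sqrt_congr (hA : A.PosSemidef) (hB : B.PosSemidef) (h : A = B) : hA.sqrt = hB.sqrt := by
  subst h
  rfl

theorem sqrt_one (h : (1 : Matrix n n ℝ).PosSemidef) : h.sqrt = 1 :=
  (h.eq_sqrt_of_mul_self_eq .one (mul_one 1)).symm

theorem sqrt_smul (hA : A.PosSemidef) {c : ℝ} (hc : 0 ≤ c) (h : (c • A).PosSemidef) :
    h.sqrt = √c • hA.sqrt := by
  refine (h.eq_sqrt_of_mul_self_eq (hA.posSemidef_sqrt.smul (Real.sqrt_nonneg c)) ?_).symm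
  rw [smul_mul_smul_comm, Real.mul_self_sqrt hc, hA.sqrt_mul_self]

theorem sqrt_fromBlocks_diag {D : Matrix m m ℝ} (hA : A.PosSemidef) (hD : D.PosSemidef)
    (h : (fromBlocks A 0 0 D).PosSemidef) : h.sqrt = fromBlocks hA.sqrt 0 0 hD.sqrt := by
  refine (h.eq_sqrt_of_mul_self_eq (hA.posSemidef_sqrt.fromBlocks_diag hD.posSemidef_sqrt) ?_).symm
  rw [fromBlocks_diag_mul_fromBlocks_diag, hA.sqrt_mul_self, hD.sqrt_mul_self]

end Matrix.PosSemidef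

namespace Matrix.PosDef

variable {m n : Type*} [Fintype m] [Fintype n] [DecidableEq n]

theorem isUnit_det_sqrt {A : Matrix n n ℝ} (hA : A.PosDef) : IsUnit hA.posSemidef.sqrt.det :=
  (isUnit_iff_isUnit_det _).mp <|
    isUnit_of_mul_isUnit_left (hA.posSemidef.sqrt_mul_self ▸ hA.isUnit)

theorem inv_sqrt_mul_mul_inv_sqrt {X : Matrix n n ℝ} (T : Matrix m n ℝ)
    (hA : (X + Tᵀ * T).PosDef) :
    hA.posSemidef.sqrt⁻¹ * X * hA.posSemidef.sqrt⁻¹ =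
      1 - (T * hA.posSemidef.sqrt⁻¹)ᵀ * (T * hA.posSemidef.sqrt⁻¹) :=
  inv_mul_mul_inv_eq_one_sub T hA.posSemidef.transpose_sqrt hA.isUnit_det_sqrt
    hA.posSemidef.sqrt_mul_self

theorem inv_sqrt_fromBlocks_smul {l : Type*} [Fintype l] [DecidableEq l] [DecidableEq m]
    {ρ : ℝ} (hρ : 0 < ρ) {Q₁ : Matrix l l ℝ} {Q₂ : Matrix m m ℝ} (h₁ : Q₁.PosDef) (h₂ : Q₂.PosDef)
    (h : (fromBlocks (ρ • fromBlocks Q₁ 0 0 Q₂) 0 0 (ρ⁻¹ • (1 : Matrix n n ℝ))).PosSemidef) :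
    h.sqrt⁻¹ = fromBlocks ((√ρ)⁻¹ • fromBlocks h₁.posSemidef.sqrt⁻¹ 0 0 h₂.posSemidef.sqrt⁻¹)
      0 0 (√ρ • 1) := by
  have hs : √ρ ≠ 0 := (Real.sqrt_pos.2 hρ).ne'
  have hQ := h₁.posSemidef.fromBlocks_diag h₂.posSemidef
  have hI : (ρ⁻¹ • (1 : Matrix n n ℝ)).PosSemidef := PosSemidef.one.smul (inv_nonneg.2 hρ.le)
  rw [PosSemidef.sqrt_fromBlocks_diag (hQ.smul hρ.le) hI, PosSemidef.sqrt_smul hQ hρ.le,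
    PosSemidef.sqrt_smul .one (inv_nonneg.2 hρ.le), PosSemidef.sqrt_one,
    PosSemidef.sqrt_fromBlocks_diag h₁.posSemidef h₂.posSemidef, Real.sqrt_inv]
  refine inv_fromBlocks_diag_eq ?_ ?_
  · rw [smul_mul_smul_comm, mul_inv_cancel₀ hs, one_smul, fromBlocks_diag_mul_fromBlocks_diag,
      mul_nonsing_inv _ h₁.isUnit_det_sqrt, mul_nonsing_inv _ h₂.isUnit_det_sqrt, fromBlocks_one]
  · rw [smul_mul_smul_comm, inv_mul_cancel₀ hs, one_smul, mul_one]

end Matrix.PosDef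

theorem stmt2_general
    (nq nu nobs : ℕ) (α ρ : ℝ) (hρ : 0 < ρ)
    (R : Matrix (Fin nq) (Fin nq) ℝ) (T : Matrix (Fin nu) (Fin nq) ℝ)
    (A : Matrix (Fin nu) (Fin nu) ℝ) (B : Matrix (Fin nobs) (Fin nu) ℝ)
    (hSR : ((α / ρ) • (Rᵀ * R) + Tᵀ * T).PosDef)
    (hSA : ((1 / ρ) • (Bᵀ * B) + Aᵀ * A).PosDef)
    (F : Matrix (Fin nu) (Fin nq) ℝ) (hF : F = T * hSR.posSemidef.sqrt⁻¹)
    (G : Matrix (Fin nu) (Fin nu) ℝ) (hG : G = A * hSA.posSemidef.sqrt⁻¹)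
    (K : Matrix ((Fin nq ⊕ Fin nu) ⊕ Fin nu) ((Fin nq ⊕ Fin nu) ⊕ Fin nu) ℝ)
    (hK : K = fromBlocks
      (fromBlocks (α • (Rᵀ * R)) 0 0 (Bᵀ * B))
      (fromCols T A)ᵀ
      (fromCols T A) 0)
    (P : Matrix ((Fin nq ⊕ Fin nu) ⊕ Fin nu) ((Fin nq ⊕ Fin nu) ⊕ Fin nu) ℝ)
    (hP : P = fromBlocks
      (fromBlocks (α • (Rᵀ * R) + ρ • (Tᵀ * T)) 0 0 (Bᵀ * B + ρ • (Aᵀ * A))) 0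
      0 ((1 / ρ) • 1))
    (hPpd : P.PosDef)
    (E : Matrix ((Fin nq ⊕ Fin nu) ⊕ Fin nu) ((Fin nq ⊕ Fin nu) ⊕ Fin nu) ℝ)
    (hE : E = fromBlocks
      (fromBlocks (1 - Fᵀ * F) 0 0 (1 - Gᵀ * G))
      (fromCols F G)ᵀ
      (fromCols F G) 0) :
    hPpd.posSemidef.sqrt⁻¹ * K * hPpd.posSemidef.sqrt⁻¹ = E := by
  have hP_eq : P = fromBlocks (ρ • fromBlocks ((α / ρ) • (Rᵀ * R) + Tᵀ * T) 0 0
      ((1 / ρ) • (Bᵀ * B) + Aᵀ * A)) 0 0 (ρ⁻¹ • 1) := by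
    rw [hP, fromBlocks_smul, smul_zero, smul_zero, smul_add, smul_add, smul_smul, smul_smul,
      mul_div_cancel₀ _ hρ.ne', mul_one_div_cancel hρ.ne', one_smul, one_div]
  have h_symm : (fromBlocks hSR.posSemidef.sqrt⁻¹ 0 0 hSA.posSemidef.sqrt⁻¹)ᵀ =
      fromBlocks hSR.posSemidef.sqrt⁻¹ 0 0 hSA.posSemidef.sqrt⁻¹ := by
    rw [fromBlocks_transpose, transpose_nonsing_inv, transpose_nonsing_inv,
      hSR.posSemidef.transpose_sqrt, hSA.posSemidef.transpose_sqrt, transpose_zero, transpose_zero]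
  rw [PosSemidef.sqrt_congr _ (hP_eq ▸ hPpd.posSemidef) hP_eq,
    PosDef.inv_sqrt_fromBlocks_smul hρ hSR hSA, hK, hE,
    fromBlocks_smul_mul_saddlePoint_mul_fromBlocks_smul (Real.sqrt_pos.2 hρ).ne' h_symm,
    Real.mul_self_sqrt hρ.le, fromCols_mul_fromBlocks, fromBlocks_smul,
    fromBlocks_diag_mul_fromBlocks_mul_fromBlocks_diag, smul_smul, inv_mul_eq_div, inv_eq_one_div ρ,
    hSR.inv_sqrt_mul_mul_inv_sqrt, hSA.inv_sqrt_mul_mul_inv_sqrt, hF, hG]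
  simp

/-- The symmetrically preconditioned KKT matrix `P^{-1/2} K P^{-1/2}` equals the
block matrix `E = [[I − FᵀF, 0, Fᵀ],[0, I − GᵀG, Gᵀ],[F, G, 0]]`. -/
theorem stmt2
    (nq nu nobs : ℕ) (α ρ : ℝ) (hα : 0 < α) (hρ : 0 < ρ)
    (R : Matrix (Fin nq) (Fin nq) ℝ) (T : Matrix (Fin nu) (Fin nq) ℝ)
    (A : Matrix (Fin nu) (Fin nu) ℝ) (B : Matrix (Fin nobs) (Fin nu) ℝ)
    (hR : IsUnit R.det) (hA : IsUnit A.det)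
    (hSR : ((α / ρ) • (Rᵀ * R) + Tᵀ * T).PosDef)
    (hSA : ((1 / ρ) • (Bᵀ * B) + Aᵀ * A).PosDef)
    (F : Matrix (Fin nu) (Fin nq) ℝ) (hF : F = T * hSR.posSemidef.sqrt⁻¹)
    (G : Matrix (Fin nu) (Fin nu) ℝ) (hG : G = A * hSA.posSemidef.sqrt⁻¹)
    (K : Matrix ((Fin nq ⊕ Fin nu) ⊕ Fin nu) ((Fin nq ⊕ Fin nu) ⊕ Fin nu) ℝ)
    (hK : K = fromBlocks
      (fromBlocks (α • (Rᵀ * R)) 0 0 (Bᵀ * B))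
      (fromCols T A)ᵀ
      (fromCols T A) 0)
    (P : Matrix ((Fin nq ⊕ Fin nu) ⊕ Fin nu) ((Fin nq ⊕ Fin nu) ⊕ Fin nu) ℝ)
    (hP : P = fromBlocks
      (fromBlocks (α • (Rᵀ * R) + ρ • (Tᵀ * T)) 0 0 (Bᵀ * B + ρ • (Aᵀ * A))) 0
      0 ((1 / ρ) • 1))
    (hPpd : P.PosDef)
    (E : Matrix ((Fin nq ⊕ Fin nu) ⊕ Fin nu) ((Fin nq ⊕ Fin nu) ⊕ Fin nu) ℝ)
    (hE : E = fromBlocks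
      (fromBlocks (1 - Fᵀ * F) 0 0 (1 - Gᵀ * G))
      (fromCols F G)ᵀ
      (fromCols F G) 0) :
    hPpd.posSemidef.sqrt⁻¹ * K * hPpd.posSemidef.sqrt⁻¹ = E :=
  stmt2_general nq nu nobs α ρ hρ R T A B hSR hSA F hF G hG K hK P hP hPpd E hE
end

section
/- Suppose the geometric-mean assumption holds: β < 1 satisfies ‖FᵀG‖ ≤ β in the spectral norm. Then the preconditioned objective block X is coercive on the kernel of the preconditioned constraint block Y with constant 1 − β: for every x ∈ ℝ^{n_q+n_u} with Yx = 0, one has ⟨x, Xx⟩ ≥ (1 − β)‖x‖². -/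
open Matrix

/-- The positive semidefinite square root of a positive semidefinite matrix, as defined in the
older Mathlib (`Matrix.PosSemidef.sqrt`, since removed). -/
noncomputable def posSemidefSqrt {n : Type} [Fintype n] [DecidableEq n] {A : Matrix n n ℝ}
    (hA : A.PosSemidef) : Matrix n n ℝ :=
  (hA.1.eigenvectorUnitary : Matrix n n ℝ) * diagonal ((↑) ∘ (√·) ∘ hA.1.eigenvalues) *
    (star hA.1.eigenvectorUnitary : Matrix n n ℝ)

/-! Write `x = (a, b)`. On the kernel of `Y`, `p := F a = -G b`, so `⟪a, FᵀG b⟫ = -‖p‖²` and hence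
`‖p‖² ≤ β ‖a‖ ‖b‖`. The quadratic form is `⟪x, X x⟫ = ‖a‖² + ‖b‖² - 2‖p‖²`, and
`2 β ‖a‖ ‖b‖ ≤ β (‖a‖² + ‖b‖²)` leaves `(1 - β) ‖x‖²`. -/

open WithLp

lemma one_sub_mul_sq_add_sq_le_of_add_eq_zero {H : Type*} [NormedAddCommGroup H]
    [InnerProductSpace ℝ H] {p q : H} (hpq : p + q = 0) {β s t : ℝ} (hβ : 0 ≤ β)
    (hpq_le : |inner ℝ p q| ≤ β * (s * t)) :
    (1 - β) * (s ^ 2 + t ^ 2) ≤ s ^ 2 - ‖p‖ ^ 2 + (t ^ 2 - ‖q‖ ^ 2) := by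
  obtain rfl : q = -p := eq_neg_of_add_eq_zero_right hpq
  rw [inner_neg_right, real_inner_self_eq_norm_sq, abs_neg, abs_of_nonneg (sq_nonneg _)]
    at hpq_le
  rw [norm_neg]
  nlinarith [mul_nonneg hβ (sq_nonneg (s - t))]

lemma EuclideanSpace.exists_eq_toLp_sumElim {ι κ : Type} (x : EuclideanSpace ℝ (ι ⊕ κ)) :
    ∃ (a : EuclideanSpace ℝ ι) (b : EuclideanSpace ℝ κ),
      x = toLp 2 (Sum.elim (ofLp a) (ofLp b)) :=
  ⟨toLp 2 fun i => x (.inl i), toLp 2 fun i => x (.inr i), by ext (i | i) <;> rfl⟩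

section Blocks

variable {ι κ μ : Type} [Fintype ι] [Fintype κ] [Fintype μ]

lemma EuclideanSpace.norm_toLp_sumElim_sq (a : EuclideanSpace ℝ ι) (b : EuclideanSpace ℝ κ) :
    ‖toLp 2 (Sum.elim (ofLp a) (ofLp b))‖ ^ 2 = ‖a‖ ^ 2 + ‖b‖ ^ 2 := by
  simp only [← real_inner_self_eq_norm_sq, EuclideanSpace.inner_eq_star_dotProduct, star_trivial]
  exact sumElim_dotProduct_sumElim _ _ _ _

variable [DecidableEq ι] [DecidableEq κ]

@[simp]
lemma ofLp_mulVecE (M : Matrix μ ι ℝ) (v : EuclideanSpace ℝ ι) :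
    ofLp (mulVecE M v) = M *ᵥ ofLp v :=
  rfl

lemma inner_mulVecE_eq_dotProduct (M : Matrix μ ι ℝ) (u : EuclideanSpace ℝ μ)
    (v : EuclideanSpace ℝ ι) : inner ℝ u (mulVecE M v) = ofLp u ⬝ᵥ (M *ᵥ ofLp v) := by
  rw [EuclideanSpace.inner_eq_star_dotProduct, dotProduct_comm, ofLp_mulVecE, star_trivial]

lemma inner_mulVecE_mulVecE (F : Matrix μ ι ℝ) (G : Matrix μ κ ℝ) (a : EuclideanSpace ℝ ι)
    (b : EuclideanSpace ℝ κ) :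
    inner ℝ (mulVecE F a) (mulVecE G b) = inner ℝ a (mulVecE (Fᵀ * G) b) := by
  rw [inner_mulVecE_eq_dotProduct, inner_mulVecE_eq_dotProduct, ← mulVec_mulVec,
    dotProduct_mulVec (ofLp a), vecMul_transpose, ofLp_mulVecE]

lemma abs_inner_mulVecE_le (F : Matrix μ ι ℝ) (G : Matrix μ κ ℝ) (a : EuclideanSpace ℝ ι)
    (b : EuclideanSpace ℝ κ) :
    |inner ℝ (mulVecE F a) (mulVecE G b)| ≤ specNorm (Fᵀ * G) * (‖a‖ * ‖b‖) := by
  rw [inner_mulVecE_mulVecE, mul_left_comm]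
  calc |inner ℝ a (mulVecE (Fᵀ * G) b)| ≤ ‖a‖ * ‖mulVecE (Fᵀ * G) b‖ :=
        abs_real_inner_le_norm _ _
    _ ≤ ‖a‖ * (specNorm (Fᵀ * G) * ‖b‖) := by
        gcongr
        exact (Matrix.toEuclideanLin (Fᵀ * G)).toContinuousLinearMap.le_opNorm b

lemma inner_mulVecE_one_sub_transpose_mul_self (F : Matrix μ ι ℝ) (a : EuclideanSpace ℝ ι) :
    inner ℝ a (mulVecE (1 - Fᵀ * F) a) = ‖a‖ ^ 2 - ‖mulVecE F a‖ ^ 2 := by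
  rw [← real_inner_self_eq_norm_sq, ← real_inner_self_eq_norm_sq, inner_mulVecE_mulVecE,
    ← inner_sub_right]
  congr 1
  apply WithLp.ofLp_injective
  simp only [ofLp_mulVecE, ofLp_sub, sub_mulVec, one_mulVec]

lemma mulVecE_fromCols_toLp_sumElim (F : Matrix μ ι ℝ) (G : Matrix μ κ ℝ)
    (a : EuclideanSpace ℝ ι) (b : EuclideanSpace ℝ κ) :
    mulVecE (fromCols F G) (toLp 2 (Sum.elim (ofLp a) (ofLp b))) = mulVecE F a + mulVecE G b :=
  congrArg (toLp 2) (fromCols_mulVec_sumElim _ _ _ _)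

lemma inner_mulVecE_fromBlocks_zero_zero (P : Matrix ι ι ℝ) (Q : Matrix κ κ ℝ)
    (a : EuclideanSpace ℝ ι) (b : EuclideanSpace ℝ κ) :
    inner ℝ (toLp 2 (Sum.elim (ofLp a) (ofLp b)))
        (mulVecE (fromBlocks P 0 0 Q) (toLp 2 (Sum.elim (ofLp a) (ofLp b)))) =
      inner ℝ a (mulVecE P a) + inner ℝ b (mulVecE Q b) := by
  simp only [inner_mulVecE_eq_dotProduct, fromBlocks_mulVec, zero_mulVec, add_zero, zero_add,
    Sum.elim_comp_inl, Sum.elim_comp_inr]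
  exact sumElim_dotProduct_sumElim _ _ _ _

end Blocks


theorem stmt3_general
    (nq nu : ℕ)
    (F : Matrix (Fin nu) (Fin nq) ℝ)
    (G : Matrix (Fin nu) (Fin nu) ℝ)
    (X : Matrix (Fin nq ⊕ Fin nu) (Fin nq ⊕ Fin nu) ℝ)
    (hX : X = fromBlocks (1 - Fᵀ * F) 0 0 (1 - Gᵀ * G))
    (Y : Matrix (Fin nu) (Fin nq ⊕ Fin nu) ℝ)
    (hY : Y = fromCols F G)
    (β : ℝ) (hβ : specNorm (Fᵀ * G) ≤ β) :
    ∀ x : EuclideanSpace ℝ (Fin nq ⊕ Fin nu),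
      mulVecE Y x = 0 → (1 - β) * ‖x‖ ^ 2 ≤ inner ℝ x (mulVecE X x) := by
  subst hX hY
  intro x hx
  obtain ⟨a, b, rfl⟩ := EuclideanSpace.exists_eq_toLp_sumElim x
  rw [mulVecE_fromCols_toLp_sumElim] at hx
  rw [EuclideanSpace.norm_toLp_sumElim_sq, inner_mulVecE_fromBlocks_zero_zero,
    inner_mulVecE_one_sub_transpose_mul_self, inner_mulVecE_one_sub_transpose_mul_self]
  exact one_sub_mul_sq_add_sq_le_of_add_eq_zero hx ((norm_nonneg _).trans hβ)
    ((abs_inner_mulVecE_le F G a b).trans (by gcongr))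

/-- Under the geometric-mean bound `‖FᵀG‖ ≤ β < 1`, the preconditioned objective
block `X` is coercive with constant `1 − β` on the kernel of `Y = [F G]`. -/
theorem stmt3
    (nq nu nobs : ℕ) (α ρ : ℝ) (hα : 0 < α) (hρ : 0 < ρ)
    (R : Matrix (Fin nq) (Fin nq) ℝ) (T : Matrix (Fin nu) (Fin nq) ℝ)
    (A : Matrix (Fin nu) (Fin nu) ℝ) (B : Matrix (Fin nobs) (Fin nu) ℝ)
    (hR : IsUnit R.det) (hA : IsUnit A.det)
    (hSR : ((α / ρ) • (Rᵀ * R) + Tᵀ * T).PosDef)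
    (hSA : ((1 / ρ) • (Bᵀ * B) + Aᵀ * A).PosDef)
    (F : Matrix (Fin nu) (Fin nq) ℝ) (hF : F = T * (posSemidefSqrt hSR.posSemidef)⁻¹)
    (G : Matrix (Fin nu) (Fin nu) ℝ) (hG : G = A * (posSemidefSqrt hSA.posSemidef)⁻¹)
    (X : Matrix (Fin nq ⊕ Fin nu) (Fin nq ⊕ Fin nu) ℝ)
    (hX : X = fromBlocks (1 - Fᵀ * F) 0 0 (1 - Gᵀ * G))
    (Y : Matrix (Fin nu) (Fin nq ⊕ Fin nu) ℝ)
    (hY : Y = fromCols F G)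
    (β : ℝ) (hβ1 : β < 1) (hβ : specNorm (Fᵀ * G) ≤ β) :
    ∀ x : EuclideanSpace ℝ (Fin nq ⊕ Fin nu),
      mulVecE Y x = 0 → (1 - β) * ‖x‖ ^ 2 ≤ inner ℝ x (mulVecE X x) :=
  stmt3_general nq nu F G X hX Y hY β hβ
end

section
/- Assume the appropriate regularization conditions: there are constants c_u > 0 and c_o ≥ 0 with d_k² + α r_k² ≥ c_u and d_k r_k ≤ c_o for all k = 1, …, n. Then the AM-GM bounds hold with constants δ = ½(1 + (α/ρ²)c_o²)⁻¹ and β = (1 + c_u/ρ)^{-1/2}; that is, λ_min(½(Q_R + Q_J)) ≥ ½(1 + (α/ρ²)c_o²)⁻¹ and λ_max(Q_R Q_J) ≤ (1 + c_u/ρ)⁻¹. -/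
open Matrix

/-!
The two damped projectors are simultaneously diagonalised by `Φ`, so `½(Q_R + Q_J)` and
`Q_R Q_J` are `Φ`-conjugates of diagonal matrices and their eigenvalues are the numbers
`½((1 + x_k)⁻¹ + (1 + y_k)⁻¹)` and `(1 + x_k)⁻¹(1 + y_k)⁻¹`, where `x_k = (α/ρ) r_k²` and
`y_k = d_k²/ρ`. The bounds are then scalar inequalities: `x_k y_k = (α/ρ²)(d_k r_k)² ≤ (α/ρ²) c_o²`
bounds the arithmetic mean from below, and `x_k + y_k = (d_k² + α r_k²)/ρ ≥ c_u/ρ` bounds the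
product from above.
-/

theorem hasEigenvalue_toEuclideanLin_iff {𝕜 n : Type*} [RCLike 𝕜] [Fintype n] [DecidableEq n]
    (A : Matrix n n 𝕜) (μ : 𝕜) :
    Module.End.HasEigenvalue (toEuclideanLin A) μ ↔ μ ∈ spectrum 𝕜 A := by
  rw [Module.End.hasEigenvalue_iff_mem_spectrum, toEuclideanLin_eq_toLin_orthonormal,
    spectrum_toLin]

theorem spectrum_mul_diagonal_mul {R n : Type*} [Field R] [Fintype n] [DecidableEq n]
    {Φ Ψ : Matrix n n R} (h : Ψ * Φ = 1) (e : n → R) :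
    spectrum R (Φ * diagonal e * Ψ) = Set.range e := by
  let u : (Matrix n n R)ˣ := ⟨Φ, Ψ, mul_eq_one_comm.mp h, h⟩
  exact (spectrum.units_conjugate (u := u)).trans (spectrum_diagonal e)

section Conjugation

variable {R n : Type*} [CommSemiring R] [Fintype n] [DecidableEq n] (Φ Ψ : Matrix n n R)

theorem mul_diagonal_mul_add (e f : n → R) :
    Φ * diagonal e * Ψ + Φ * diagonal f * Ψ = Φ * diagonal (e + f) * Ψ := by
  rw [← Matrix.add_mul, ← Matrix.mul_add, diagonal_add]
  rfl

theorem smul_mul_diagonal_mul (c : R) (e : n → R) :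
    c • (Φ * diagonal e * Ψ) = Φ * diagonal (c • e) * Ψ := by
  rw [diagonal_smul, Matrix.mul_smul, Matrix.smul_mul]

theorem mul_diagonal_mul_mul {Φ Ψ : Matrix n n R} (h : Ψ * Φ = 1) (e f : n → R) :
    Φ * diagonal e * Ψ * (Φ * diagonal f * Ψ) = Φ * diagonal (e * f) * Ψ := by
  rw [show e * f = fun i => e i * f i from rfl, ← diagonal_mul_diagonal]
  simp only [Matrix.mul_assoc]
  rw [← Matrix.mul_assoc Ψ, h, Matrix.one_mul]

end Conjugation

theorem inv_one_add_le_inv_add_one_add_inv_add_one {x y c : ℝ} (hx : 0 ≤ x) (hy : 0 ≤ y)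
    (hxy : x * y ≤ c) : (1 + c)⁻¹ ≤ (x + 1)⁻¹ + (y + 1)⁻¹ := by
  have hc : 0 < 1 + c := by nlinarith [mul_nonneg hx hy]
  rw [inv_add_inv (by positivity) (by positivity), inv_eq_one_div,
    div_le_div_iff₀ hc (by positivity)]
  nlinarith [mul_nonneg hx hy, mul_nonneg (sub_nonneg.mpr hxy) (by positivity : 0 ≤ x + y + 2)]

theorem inv_add_one_mul_inv_add_one_le {x y c : ℝ} (hx : 0 ≤ x) (hy : 0 ≤ y) (hc : 0 < 1 + c)
    (hxy : c ≤ x + y) : (x + 1)⁻¹ * (y + 1)⁻¹ ≤ (1 + c)⁻¹ := by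
  rw [← mul_inv]
  exact inv_anti₀ hc (by nlinarith [mul_nonneg hx hy])

theorem stmt11_general (n : ℕ) (α ρ : ℝ) (hα : 0 < α) (hρ : 0 < ρ)
    (Φ : Matrix (Fin n) (Fin n) ℝ) (hΦ : Φᵀ * Φ = 1 ∧ Φ * Φᵀ = 1)
    (d r : Fin n → ℝ) (hd : ∀ k, 0 ≤ d k) (hr : ∀ k, 0 ≤ r k)
    (cu co : ℝ) (hcu : 0 < cu)
    (hunder : ∀ k, cu ≤ d k ^ 2 + α * r k ^ 2)
    (hover : ∀ k, d k * r k ≤ co)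
    (QR QJ : Matrix (Fin n) (Fin n) ℝ)
    (hQR : QR = Φ * diagonal (fun k => ((α / ρ) * r k ^ 2 + 1)⁻¹) * Φᵀ)
    (hQJ : QJ = Φ * diagonal (fun k => ((1 / ρ) * d k ^ 2 + 1)⁻¹) * Φᵀ)
    :
    (∀ μ : ℝ, Module.End.HasEigenvalue
        (Matrix.toEuclideanLin ((2 : ℝ)⁻¹ • (QR + QJ))) μ →
      (1 / 2) * (1 + (α / ρ ^ 2) * co ^ 2)⁻¹ ≤ μ) ∧
    (∀ μ : ℝ, Module.End.HasEigenvalue (Matrix.toEuclideanLin (QR * QJ)) μ →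
      μ ≤ (1 + cu / ρ)⁻¹) := by
  obtain ⟨hΦΦ, -⟩ := hΦ
  have hx : ∀ k, 0 ≤ (α / ρ) * r k ^ 2 := fun k => by positivity
  have hy : ∀ k, 0 ≤ (1 / ρ) * d k ^ 2 := fun k => by positivity
  simp only [hQR, hQJ, mul_diagonal_mul_add, smul_mul_diagonal_mul, mul_diagonal_mul_mul hΦΦ,
    hasEigenvalue_toEuclideanLin_iff, spectrum_mul_diagonal_mul hΦΦ]
  refine ⟨?_, ?_⟩
  · rintro _ ⟨k, rfl⟩
    have hxy : (α / ρ) * r k ^ 2 * ((1 / ρ) * d k ^ 2) ≤ (α / ρ ^ 2) * co ^ 2 := by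
      have hdr : (d k * r k) ^ 2 ≤ co ^ 2 :=
        pow_le_pow_left₀ (mul_nonneg (hd k) (hr k)) (hover k) 2
      calc (α / ρ) * r k ^ 2 * ((1 / ρ) * d k ^ 2) = (α / ρ ^ 2) * (d k * r k) ^ 2 := by ring
        _ ≤ (α / ρ ^ 2) * co ^ 2 := by gcongr
    have hmean := inv_one_add_le_inv_add_one_add_inv_add_one (hx k) (hy k) hxy
    simp only [Pi.smul_apply, Pi.add_apply, smul_eq_mul]
    linarith
  · rintro _ ⟨k, rfl⟩
    have hxy : cu / ρ ≤ (α / ρ) * r k ^ 2 + (1 / ρ) * d k ^ 2 := by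
      calc cu / ρ ≤ (d k ^ 2 + α * r k ^ 2) / ρ := by gcongr; exact hunder k
        _ = (α / ρ) * r k ^ 2 + (1 / ρ) * d k ^ 2 := by ring
    exact inv_add_one_mul_inv_add_one_le (hx k) (hy k) (by positivity) hxy

/-- For source inversion with spectral filtering regularization, appropriate
regularization (constants `cu`, `co`) implies the AM-GM bounds with
`δ = ½(1 + (α/ρ²)co²)⁻¹` and `β² = (1 + cu/ρ)⁻¹`. -/
theorem stmt11 (n : ℕ) (hn : 1 ≤ n) (α ρ : ℝ) (hα : 0 < α) (hρ : 0 < ρ)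
    (Φ : Matrix (Fin n) (Fin n) ℝ) (hΦ : Φᵀ * Φ = 1 ∧ Φ * Φᵀ = 1)
    (d r : Fin n → ℝ) (hd : ∀ k, 0 ≤ d k) (hr : ∀ k, 0 ≤ r k)
    (cu co : ℝ) (hcu : 0 < cu) (hco : 0 ≤ co)
    (hunder : ∀ k, cu ≤ d k ^ 2 + α * r k ^ 2)
    (hover : ∀ k, d k * r k ≤ co)
    (QR QJ : Matrix (Fin n) (Fin n) ℝ)
    (hQR : QR = Φ * diagonal (fun k => ((α / ρ) * r k ^ 2 + 1)⁻¹) * Φᵀ)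
    (hQJ : QJ = Φ * diagonal (fun k => ((1 / ρ) * d k ^ 2 + 1)⁻¹) * Φᵀ)
    :
    (∀ μ : ℝ, Module.End.HasEigenvalue
        (Matrix.toEuclideanLin ((2 : ℝ)⁻¹ • (QR + QJ))) μ →
      (1 / 2) * (1 + (α / ρ ^ 2) * co ^ 2)⁻¹ ≤ μ) ∧
    (∀ μ : ℝ, Module.End.HasEigenvalue (Matrix.toEuclideanLin (QR * QJ)) μ →
      μ ≤ (1 + cu / ρ)⁻¹) :=
  stmt11_general n α ρ hα hρ Φ hΦ d r hd hr cu co hcu hunder hover QR QJ hQR hQJ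
end

section
/- For all real numbers α > 0, ρ > 0, c_o ≥ 0, and all r ≥ 0, d ≥ 0 with d·r ≤ c_o, one has ½·( 1/((α/ρ)r² + 1) + 1/((1/ρ)d² + 1) ) ≥ ½·(1 + (α/ρ²)c_o²)⁻¹. -/
open Matrix

/-- Per-mode arithmetic-mean estimate: if `d·r ≤ co` then
`½(1/((α/ρ)r² + 1) + 1/((1/ρ)d² + 1)) ≥ ½(1 + (α/ρ²)co²)⁻¹`. -/
theorem stmt12 (α ρ co r d : ℝ) (hα : 0 < α) (hρ : 0 < ρ) (hco : 0 ≤ co)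
    (hr : 0 ≤ r) (hd : 0 ≤ d) (h : d * r ≤ co) :
    (1 / 2) * (1 + (α / ρ ^ 2) * co ^ 2)⁻¹ ≤
      (1 / 2) * (((α / ρ) * r ^ 2 + 1)⁻¹ + ((1 / ρ) * d ^ 2 + 1)⁻¹) := by
  have hA : (0:ℝ) < (α / ρ) * r ^ 2 + 1 := by positivity
  have hB : (0:ℝ) < (1 / ρ) * d ^ 2 + 1 := by positivity
  have hC : (0:ℝ) < 1 + (α / ρ ^ 2) * co ^ 2 := by positivity
  have hdr : d ^ 2 * r ^ 2 ≤ co ^ 2 := by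
    have := mul_le_mul h h (mul_nonneg hd hr) hco
    nlinarith
  have key : ((α / ρ) * r ^ 2 + 1) * ((1 / ρ) * d ^ 2 + 1) ≤
      (1 + (α / ρ ^ 2) * co ^ 2) * (((α / ρ) * r ^ 2 + 1) + ((1 / ρ) * d ^ 2 + 1)) := by
    have hρ2 : (0:ℝ) < ρ ^ 2 := by positivity
    have h1 : (α / ρ) * (1 / ρ) = α / ρ ^ 2 := by
      rw [div_mul_div_comm, mul_one, sq]
    have h2 : (α / ρ ^ 2) * (d ^ 2 * r ^ 2) ≤ (α / ρ ^ 2) * co ^ 2 :=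
      mul_le_mul_of_nonneg_left hdr (by positivity)
    have h3 : 0 ≤ (α / ρ ^ 2) * co ^ 2 * ((α / ρ) * r ^ 2 + (1 / ρ) * d ^ 2) := by
      positivity
    nlinarith [h1, h2, h3]
  have main : (1 + (α / ρ ^ 2) * co ^ 2)⁻¹ ≤
      ((α / ρ) * r ^ 2 + 1)⁻¹ + ((1 / ρ) * d ^ 2 + 1)⁻¹ := by
    rw [inv_add_inv hA.ne' hB.ne', inv_eq_one_div,
      div_le_div_iff₀ hC (mul_pos hA hB)]
    linarith [key]
  linarith
end

section
/- Assume 0 < α ≤ 1, set ρ = √α, and assume the appropriate regularization conditions: there are constants c_u > 0 and c_o ≥ 0 with d_k² + α r_k² ≥ c_u and d_k r_k ≤ c_o for all k = 1, …, n. Then the AM-GM bounds hold with the α-independent constants δ = ½(1 + c_o²)⁻¹ and β = (1 + c_u)^{-1/2}; that is, λ_min(½(Q_R + Q_J)) ≥ ½(1 + c_o²)⁻¹ and λ_max(Q_R Q_J) ≤ (1 + c_u)⁻¹. -/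
/-!
`Q_R` and `Q_J` are simultaneously diagonalized by `Φ`, so both bounds reduce to scalar
inequalities for the filter factors `s_k = (α/ρ) r_k²` and `t_k = d_k²/ρ`. Since `ρ² = α`, their
product is `(d_k r_k)² ≤ c_o²`, and since `ρ ≤ 1`, their sum dominates `d_k² + α r_k² ≥ c_u`.
-/

open Matrix

lemma hasEigenvalue_toEuclideanLin_conj_diagonal_iff {ι : Type*} [Fintype ι] [DecidableEq ι]
    {Φ : Matrix ι ι ℝ} (hΦ : Φ * Φᵀ = 1) (f : ι → ℝ) {μ : ℝ} :
    Module.End.HasEigenvalue (toEuclideanLin (Φ * diagonal f * Φᵀ)) μ ↔ ∃ k, f k = μ := by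
  let u : (Matrix ι ι ℝ)ˣ := ⟨Φ, Φᵀ, hΦ, mul_eq_one_comm.mp hΦ⟩
  rw [Module.End.hasEigenvalue_iff_mem_spectrum, spectrum_toLpLin,
    show Φ * diagonal f * Φᵀ = u * diagonal f * ↑u⁻¹ from rfl, spectrum.units_conjugate,
    spectrum_diagonal, Set.mem_range]

lemma conj_diagonal_mul_conj_diagonal {ι R : Type*} [Fintype ι] [DecidableEq ι]
    [CommSemiring R] {Φ : Matrix ι ι R} (hΦ : Φᵀ * Φ = 1) (f g : ι → R) :
    Φ * diagonal f * Φᵀ * (Φ * diagonal g * Φᵀ) = Φ * diagonal (f * g) * Φᵀ := by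
  calc Φ * diagonal f * Φᵀ * (Φ * diagonal g * Φᵀ)
      = Φ * diagonal f * (Φᵀ * Φ) * diagonal g * Φᵀ := by simp only [Matrix.mul_assoc]
    _ = Φ * diagonal (f * g) * Φᵀ := by
      rw [hΦ, Matrix.mul_one, Matrix.mul_assoc Φ, diagonal_mul_diagonal]; rfl

lemma smul_conj_diagonal_add_conj_diagonal {ι R : Type*} [Fintype ι] [DecidableEq ι]
    [CommSemiring R] (Φ : Matrix ι ι R) (c : R) (f g : ι → R) :
    c • (Φ * diagonal f * Φᵀ + Φ * diagonal g * Φᵀ) = Φ * diagonal (c • (f + g)) * Φᵀ := by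
  rw [← Matrix.add_mul, ← Matrix.mul_add, diagonal_add, ← Matrix.smul_mul, ← Matrix.mul_smul,
    diagonal_smul]
  rfl

lemma inv_one_add_sq_le_inv_add_one_add_inv_add_one {s t c : ℝ} (hs : 0 ≤ s) (ht : 0 ≤ t)
    (hst : s * t ≤ c ^ 2) : (1 + c ^ 2)⁻¹ ≤ (s + 1)⁻¹ + (t + 1)⁻¹ := by
  rw [inv_add_inv (by positivity) (by positivity), inv_eq_one_div,
    div_le_div_iff₀ (by positivity) (by positivity)]
  nlinarith [mul_nonneg (sq_nonneg c) (add_nonneg hs ht)]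

lemma inv_add_one_mul_inv_add_one_le_s14 {s t c : ℝ} (hs : 0 ≤ s) (ht : 0 ≤ t) (hc : 0 < 1 + c)
    (hst : c ≤ s + t) : (s + 1)⁻¹ * (t + 1)⁻¹ ≤ (1 + c)⁻¹ := by
  rw [← mul_inv]
  exact inv_anti₀ hc (by nlinarith [mul_nonneg hs ht])

theorem stmt14_general (n : ℕ) (α ρ : ℝ) (hα : 0 < α) (hα1 : α ≤ 1)
    (hρ : ρ = Real.sqrt α)
    (Φ : Matrix (Fin n) (Fin n) ℝ) (hΦ : Φᵀ * Φ = 1 ∧ Φ * Φᵀ = 1)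
    (d r : Fin n → ℝ) (hd : ∀ k, 0 ≤ d k) (hr : ∀ k, 0 ≤ r k)
    (cu co : ℝ) (hcu : 0 < cu)
    (hunder : ∀ k, cu ≤ d k ^ 2 + α * r k ^ 2)
    (hover : ∀ k, d k * r k ≤ co)
    (QR QJ : Matrix (Fin n) (Fin n) ℝ)
    (hQR : QR = Φ * diagonal (fun k => ((α / ρ) * r k ^ 2 + 1)⁻¹) * Φᵀ)
    (hQJ : QJ = Φ * diagonal (fun k => ((1 / ρ) * d k ^ 2 + 1)⁻¹) * Φᵀ)
    :
    (∀ μ : ℝ, Module.End.HasEigenvalue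
        (Matrix.toEuclideanLin ((2 : ℝ)⁻¹ • (QR + QJ))) μ →
      (1 / 2) * (1 + co ^ 2)⁻¹ ≤ μ) ∧
    (∀ μ : ℝ, Module.End.HasEigenvalue (Matrix.toEuclideanLin (QR * QJ)) μ →
      μ ≤ (1 + cu)⁻¹) := by
  obtain ⟨hΦl, hΦr⟩ := hΦ
  have hρ0 : 0 < ρ := hρ ▸ Real.sqrt_pos.mpr hα
  have hρ1 : ρ ≤ 1 := hρ ▸ Real.sqrt_le_one.mpr hα1
  have hρα : ρ ^ 2 = α := hρ ▸ Real.sq_sqrt hα.le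
  have hs (k) : 0 ≤ (α / ρ) * r k ^ 2 := by positivity
  have ht (k) : 0 ≤ (1 / ρ) * d k ^ 2 := by positivity
  have hst (k) : (α / ρ) * r k ^ 2 * ((1 / ρ) * d k ^ 2) ≤ co ^ 2 := by
    calc (α / ρ) * r k ^ 2 * ((1 / ρ) * d k ^ 2) = (d k * r k) ^ 2 := by
          rw [← hρα]; field_simp
      _ ≤ co ^ 2 := pow_le_pow_left₀ (mul_nonneg (hd k) (hr k)) (hover k) 2
  have hsum (k) : cu ≤ (α / ρ) * r k ^ 2 + (1 / ρ) * d k ^ 2 := by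
    have hαρ : α * r k ^ 2 ≤ (α / ρ) * r k ^ 2 := by
      gcongr; exact le_div_self hα.le hρ0 hρ1
    have hdρ : d k ^ 2 ≤ (1 / ρ) * d k ^ 2 :=
      le_mul_of_one_le_left (sq_nonneg _) (one_le_one_div hρ0 hρ1)
    linarith [hunder k]
  constructor
  · intro μ hμ
    rw [hQR, hQJ, smul_conj_diagonal_add_conj_diagonal,
      hasEigenvalue_toEuclideanLin_conj_diagonal_iff hΦr] at hμ
    obtain ⟨k, rfl⟩ := hμ
    have := inv_one_add_sq_le_inv_add_one_add_inv_add_one (hs k) (ht k) (hst k)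
    simp only [Pi.smul_apply, Pi.add_apply, smul_eq_mul]
    linarith
  · intro μ hμ
    rw [hQR, hQJ, conj_diagonal_mul_conj_diagonal hΦl,
      hasEigenvalue_toEuclideanLin_conj_diagonal_iff hΦr] at hμ
    obtain ⟨k, rfl⟩ := hμ
    exact inv_add_one_mul_inv_add_one_le_s14 (hs k) (ht k) (by linarith) (hsum k)

/-- For source inversion with spectral filtering regularization, `0 < α ≤ 1`,
and `ρ = √α`, appropriate regularization implies the AM-GM bounds with the
`α`-independent constants `δ = ½(1 + co²)⁻¹` and `β² = (1 + cu)⁻¹`. -/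
theorem stmt14 (n : ℕ) (hn : 1 ≤ n) (α ρ : ℝ) (hα : 0 < α) (hα1 : α ≤ 1)
    (hρ : ρ = Real.sqrt α)
    (Φ : Matrix (Fin n) (Fin n) ℝ) (hΦ : Φᵀ * Φ = 1 ∧ Φ * Φᵀ = 1)
    (d r : Fin n → ℝ) (hd : ∀ k, 0 ≤ d k) (hr : ∀ k, 0 ≤ r k)
    (cu co : ℝ) (hcu : 0 < cu) (hco : 0 ≤ co)
    (hunder : ∀ k, cu ≤ d k ^ 2 + α * r k ^ 2)
    (hover : ∀ k, d k * r k ≤ co)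
    (QR QJ : Matrix (Fin n) (Fin n) ℝ)
    (hQR : QR = Φ * diagonal (fun k => ((α / ρ) * r k ^ 2 + 1)⁻¹) * Φᵀ)
    (hQJ : QJ = Φ * diagonal (fun k => ((1 / ρ) * d k ^ 2 + 1)⁻¹) * Φᵀ)
    :
    (∀ μ : ℝ, Module.End.HasEigenvalue
        (Matrix.toEuclideanLin ((2 : ℝ)⁻¹ • (QR + QJ))) μ →
      (1 / 2) * (1 + co ^ 2)⁻¹ ≤ μ) ∧
    (∀ μ : ℝ, Module.End.HasEigenvalue (Matrix.toEuclideanLin (QR * QJ)) μ →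
      μ ≤ (1 + cu)⁻¹) :=
  stmt14_general n α ρ hα hα1 hρ Φ hΦ d r hd hr cu co hcu hunder hover QR QJ hQR hQJ
end

section
/- Let M be a symmetric positive semidefinite n × n real matrix and C an m × n real matrix with full row rank (i.e., Cᵀ is injective), and assume M + CᵀC is positive definite (so M + ρCᵀC is invertible for every ρ > 0). Then the scaled Schur complement ρ·C(M + ρCᵀC)⁻¹Cᵀ converges to the m × m identity matrix as ρ → ∞. -/
open Matrix

/-!
Put `P = M + CᵀC` and `G = C P⁻¹ Cᵀ`; both are positive definite, `G` because `Cᵀ` is injective.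
Writing `M + ρCᵀC = P + (ρ - 1)CᵀC`, the push-through identity
`(P + σBC)⁻¹B = P⁻¹B(1 + σCP⁻¹B)⁻¹` turns the scaled Schur complement into
`ρ C(M + ρCᵀC)⁻¹Cᵀ = G (G + ρ⁻¹(1 - G))⁻¹`, and this tends to `G G⁻¹ = 1` because matrix
inversion is continuous at the invertible matrix `G`.
-/

open Filter Topology

namespace Matrix

variable {m n α : Type*} [Fintype m] [Fintype n] [DecidableEq m] [DecidableEq n]

theorem inv_add_smul_mul_mul [CommRing α] {P : Matrix n n α} {B : Matrix n m α}
    {C : Matrix m n α} (σ : α) (hP : IsUnit P) (hX : IsUnit (P + σ • (B * C)))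
    (hY : IsUnit (1 + σ • (C * P⁻¹ * B))) :
    (P + σ • (B * C))⁻¹ * B = P⁻¹ * B * (1 + σ • (C * P⁻¹ * B))⁻¹ := by
  rw [isUnit_iff_isUnit_det] at hP hX hY
  have hpush : (P + σ • (B * C)) * (P⁻¹ * B) = B * (1 + σ • (C * P⁻¹ * B)) := by
    rw [Matrix.add_mul, mul_nonsing_inv_cancel_left P B hP, Matrix.mul_add, Matrix.mul_one,
      Matrix.smul_mul, Matrix.mul_smul, Matrix.mul_assoc, Matrix.mul_assoc]
  calc (P + σ • (B * C))⁻¹ * B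
      = (P + σ • (B * C))⁻¹ * (B * (1 + σ • (C * P⁻¹ * B))) * (1 + σ • (C * P⁻¹ * B))⁻¹ := by
        rw [Matrix.mul_assoc, Matrix.mul_assoc, mul_nonsing_inv _ hY, Matrix.mul_one]
    _ = P⁻¹ * B * (1 + σ • (C * P⁻¹ * B))⁻¹ := by
        rw [← hpush, nonsing_inv_mul_cancel_left _ _ hX]

theorem tendsto_mul_inv_add_smul [Field α] [TopologicalSpace α] [IsTopologicalRing α]
    [ContinuousInv₀ α] {G : Matrix n n α} (hG : IsUnit G) (D : Matrix n n α) :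
    Tendsto (fun ε : α => G * (G + ε • D)⁻¹) (𝓝 0) (𝓝 1) := by
  rw [isUnit_iff_isUnit_det] at hG
  have hinv : ContinuousAt Inv.inv G :=
    continuousAt_matrix_inv G (by simpa using continuousAt_inv₀ hG.ne_zero)
  have hcont : ContinuousAt (fun ε : α => G * (G + ε • D)⁻¹) 0 :=
    continuousAt_const.mul (hinv.comp_of_eq (by fun_prop) (by simp))
  simpa [mul_nonsing_inv _ hG] using hcont.tendsto

theorem smul_mul_inv_add_smul_transpose_mul_mul {M : Matrix n n ℝ} {C : Matrix m n ℝ}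
    (hMC : (M + Cᵀ * C).PosDef) {ρ : ℝ} (hρ : 1 ≤ ρ) :
    ρ • (C * (M + ρ • (Cᵀ * C))⁻¹ * Cᵀ) =
      C * (M + Cᵀ * C)⁻¹ * Cᵀ *
        (C * (M + Cᵀ * C)⁻¹ * Cᵀ + ρ⁻¹ • (1 - C * (M + Cᵀ * C)⁻¹ * Cᵀ))⁻¹ := by
  set P := M + Cᵀ * C
  set G := C * P⁻¹ * Cᵀ
  have hσ : 0 ≤ ρ - 1 := by linarith
  have hshift : M + ρ • (Cᵀ * C) = P + (ρ - 1) • (Cᵀ * C) := by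
    simp only [P, sub_smul, one_smul]
    abel
  have hCC : (Cᵀ * C).PosSemidef := by simpa using posSemidef_conjTranspose_mul_self C
  have hX : (P + (ρ - 1) • (Cᵀ * C)).PosDef := hMC.add_posSemidef (hCC.smul hσ)
  have hY : (1 + (ρ - 1) • G).PosDef :=
    PosDef.one.add_posSemidef ((hMC.inv.posSemidef.mul_mul_conjTranspose_same C).smul hσ)
  have hscale : G + ρ⁻¹ • (1 - G) = ρ⁻¹ • (1 + (ρ - 1) • G) := by
    match_scalars
    · field_simp
      ring
    · field_simp
  have : Invertible ρ⁻¹ := invertibleOfNonzero (by positivity)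
  calc ρ • (C * (M + ρ • (Cᵀ * C))⁻¹ * Cᵀ)
      = ρ • (G * (1 + (ρ - 1) • G)⁻¹) := by
        rw [hshift, Matrix.mul_assoc, inv_add_smul_mul_mul _ hMC.isUnit hX.isUnit hY.isUnit]
        simp only [G, Matrix.mul_assoc]
    _ = G * (G + ρ⁻¹ • (1 - G))⁻¹ := by
        rw [hscale, inv_smul _ _ ((isUnit_iff_isUnit_det _).mp hY.isUnit), invOf_eq_inv,
          inv_inv, Matrix.mul_smul]

end Matrix

theorem stmt15_general (n m : ℕ)
    (M : Matrix (Fin n) (Fin n) ℝ) (C : Matrix (Fin m) (Fin n) ℝ)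
    (hC : Function.Injective fun η : Fin m → ℝ => Cᵀ.mulVec η)
    (hMC : (M + Cᵀ * C).PosDef) :
    Filter.Tendsto (fun ρ : ℝ => ρ • (C * (M + ρ • (Cᵀ * C))⁻¹ * Cᵀ))
      Filter.atTop (nhds 1) := by
  have hG : (C * (M + Cᵀ * C)⁻¹ * Cᵀ).PosDef := by
    simpa using hMC.inv.conjTranspose_mul_mul_same hC
  refine ((tendsto_mul_inv_add_smul hG.isUnit (1 - C * (M + Cᵀ * C)⁻¹ * Cᵀ)).comp
    tendsto_inv_atTop_zero).congr' ?_
  filter_upwards [eventually_ge_atTop 1] with ρ hρ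
  exact (smul_mul_inv_add_smul_transpose_mul_mul hMC hρ).symm

/-- For `M` positive semidefinite, `C` of full row rank, and `M + CᵀC` positive
definite, the scaled Schur complement `ρ·C(M + ρCᵀC)⁻¹Cᵀ` converges to the
identity as `ρ → ∞`. -/
theorem stmt15 (n m : ℕ)
    (M : Matrix (Fin n) (Fin n) ℝ) (C : Matrix (Fin m) (Fin n) ℝ)
    (hM : M.PosSemidef)
    (hC : Function.Injective fun η : Fin m → ℝ => Cᵀ.mulVec η)
    (hMC : (M + Cᵀ * C).PosDef) :
    Filter.Tendsto (fun ρ : ℝ => ρ • (C * (M + ρ • (Cᵀ * C))⁻¹ * Cᵀ))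
      Filter.atTop (nhds 1) :=
  stmt15_general n m M C hC hMC
end
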